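/- arXiv:0801.2210 — 12 statements merged into one kernel-verified Lean document; each statement's English description precedes it below -/
import Mathlib

section
/- Let ψ be a 2-cocycle on L_{λ,μ} with ψ(L_0, M_n) = 0 and ψ(L_0, L_n) = 0 for all n. Then for all m, n ∈ ℤ, (m + n + 2μ)·ψ(L_m, M_n) = 0. -/
/-! `L 0` acts diagonally on `L m` and `M n`, with eigenvalues `m` and `n + 2μ`, so the cocycle
identity on `(L 0, L m, M n)` gives `(m + n + 2μ) ψ(L m, M n) = ψ(L 0, ⁅L m, M n⁆)`, and the right
side vanishes because `⁅L m, M n⁆` is a multiple of `M (m + n)`. -/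

theorem cocycle_eigen_add_mul_eq_zero {R V : Type*} [CommRing R] [LieRing V] [LieAlgebra R V]
    (ψ : V →ₗ[R] V →ₗ[R] R) (hskew : ∀ x y : V, ψ x y = - ψ y x)
    (hcoc : ∀ x y z : V, ψ ⁅x, y⁆ z + ψ ⁅y, z⁆ x + ψ ⁅z, x⁆ y = 0)
    {x a b : V} {α β : R} (ha : ⁅x, a⁆ = α • a) (hb : ⁅x, b⁆ = β • b)
    (hx : ψ x ⁅a, b⁆ = 0) :
    (α + β) * ψ a b = 0 := by
  have h := hcoc x a b
  rw [ha, ← lie_skew b x, hb, hskew ⁅a, b⁆, hx] at h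
  simp only [map_smul, map_neg, LinearMap.smul_apply, LinearMap.neg_apply, smul_eq_mul] at h
  rw [hskew b a] at h
  linear_combination h

theorem stmt_1_general (lam mu : ℂ)
    (V : Type*) [LieRing V] [LieAlgebra ℂ V]
    (L M : ℤ → V)
    (hLL : ∀ n m : ℤ, ⁅L n, L m⁆ = ((m : ℂ) - n) • L (m + n))
    (hLM : ∀ n m : ℤ, ⁅L n, M m⁆ = ((m : ℂ) - lam * n + 2 * mu) • M (m + n))
    (ψ : V →ₗ[ℂ] V →ₗ[ℂ] ℂ)
    (hskew : ∀ x y : V, ψ x y = - ψ y x)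
    (hcoc : ∀ x y z : V, ψ ⁅x, y⁆ z + ψ ⁅y, z⁆ x + ψ ⁅z, x⁆ y = 0)
    (h0M : ∀ n : ℤ, ψ (L 0) (M n) = 0) :
    ∀ m n : ℤ, ((m : ℂ) + n + 2 * mu) * ψ (L m) (M n) = 0 := by
  intro m n
  have hL : ⁅L 0, L m⁆ = (m : ℂ) • L m := by simpa using hLL 0 m
  have hM : ⁅L 0, M n⁆ = ((n : ℂ) + 2 * mu) • M n := by simpa using hLM 0 n
  have hbr : ψ (L 0) ⁅L m, M n⁆ = 0 := by rw [hLM, map_smul, h0M, smul_zero]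
  simpa only [add_assoc] using cocycle_eigen_add_mul_eq_zero ψ hskew hcoc hL hM hbr

theorem stmt_1 (lam mu : ℂ)
    (V : Type*) [LieRing V] [LieAlgebra ℂ V]
    (L Y M : ℤ → V)
    (hLL : ∀ n m : ℤ, ⁅L n, L m⁆ = ((m : ℂ) - n) • L (m + n))
    (hLY : ∀ n m : ℤ, ⁅L n, Y m⁆ = ((m : ℂ) - (lam + 1) * n / 2 + mu) • Y (m + n))
    (hYY : ∀ n m : ℤ, ⁅Y n, Y m⁆ = ((m : ℂ) - n) • M (m + n))
    (hLM : ∀ n m : ℤ, ⁅L n, M m⁆ = ((m : ℂ) - lam * n + 2 * mu) • M (m + n))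
    (hYMbr : ∀ n m : ℤ, ⁅Y n, M m⁆ = 0)
    (hMMbr : ∀ n m : ℤ, ⁅M n, M m⁆ = 0)
    (ψ : V →ₗ[ℂ] V →ₗ[ℂ] ℂ)
    (hskew : ∀ x y : V, ψ x y = - ψ y x)
    (hcoc : ∀ x y z : V, ψ ⁅x, y⁆ z + ψ ⁅y, z⁆ x + ψ ⁅z, x⁆ y = 0)
    (h0M : ∀ n : ℤ, ψ (L 0) (M n) = 0)
    (h0L : ∀ n : ℤ, ψ (L 0) (L n) = 0) :
    ∀ m n : ℤ, ((m : ℂ) + n + 2 * mu) * ψ (L m) (M n) = 0 :=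
  stmt_1_general lam mu V L M hLL hLM ψ hskew hcoc h0M
end

section
/- Let ψ be a 2-cocycle on L_{λ,μ} with ψ(L_0, Y_n) = ψ(L_0, M_n) = 0 for all n. Then for all m, n ∈ ℤ, (m + n + 3μ)·ψ(Y_m, M_n) = 0. -/
section Cocycle

variable {R L : Type*} [CommRing R] [LieRing L] [LieAlgebra R L] (ψ : L →ₗ[R] L →ₗ[R] R)

theorem cocycle_lie_left_add_lie_right_of_lie_eq_zero
    (hskew : ∀ x y : L, ψ x y = - ψ y x)
    (hcoc : ∀ x y z : L, ψ ⁅x, y⁆ z + ψ ⁅y, z⁆ x + ψ ⁅z, x⁆ y = 0)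
    {x y z : L} (hyz : ⁅y, z⁆ = 0) :
    ψ ⁅x, y⁆ z + ψ y ⁅x, z⁆ = 0 := by
  have h := hcoc x y z
  rwa [hyz, map_zero, LinearMap.zero_apply, add_zero, hskew ⁅z, x⁆, ← lie_skew z x, map_neg,
    neg_neg] at h

theorem add_mul_cocycle_eq_zero_of_lie_eq_smul
    (hskew : ∀ x y : L, ψ x y = - ψ y x)
    (hcoc : ∀ x y z : L, ψ ⁅x, y⁆ z + ψ ⁅y, z⁆ x + ψ ⁅z, x⁆ y = 0)
    {x y z : L} {a b : R} (hy : ⁅x, y⁆ = a • y) (hz : ⁅x, z⁆ = b • z) (hyz : ⁅y, z⁆ = 0) :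
    (a + b) * ψ y z = 0 := by
  have h := cocycle_lie_left_add_lie_right_of_lie_eq_zero ψ hskew hcoc (x := x) hyz
  rw [hy, hz, map_smul, map_smul, LinearMap.smul_apply, smul_eq_mul, smul_eq_mul] at h
  linear_combination h

end Cocycle

theorem stmt_2_general (lam mu : ℂ)
    (V : Type*) [LieRing V] [LieAlgebra ℂ V]
    (L Y M : ℤ → V)
    (hLY : ∀ n m : ℤ, ⁅L n, Y m⁆ = ((m : ℂ) - (lam + 1) * n / 2 + mu) • Y (m + n))
    (hLM : ∀ n m : ℤ, ⁅L n, M m⁆ = ((m : ℂ) - lam * n + 2 * mu) • M (m + n))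
    (hYMbr : ∀ n m : ℤ, ⁅Y n, M m⁆ = 0)
    (ψ : V →ₗ[ℂ] V →ₗ[ℂ] ℂ)
    (hskew : ∀ x y : V, ψ x y = - ψ y x)
    (hcoc : ∀ x y z : V, ψ ⁅x, y⁆ z + ψ ⁅y, z⁆ x + ψ ⁅z, x⁆ y = 0) :
    ∀ m n : ℤ, ((m : ℂ) + n + 3 * mu) * ψ (Y m) (M n) = 0 := by
  intro m n
  have hY : ⁅L 0, Y m⁆ = ((m : ℂ) + mu) • Y m := by simpa using hLY 0 m
  have hM : ⁅L 0, M n⁆ = ((n : ℂ) + 2 * mu) • M n := by simpa using hLM 0 n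
  linear_combination add_mul_cocycle_eq_zero_of_lie_eq_smul ψ hskew hcoc hY hM (hYMbr m n)

theorem stmt_2 (lam mu : ℂ)
    (V : Type*) [LieRing V] [LieAlgebra ℂ V]
    (L Y M : ℤ → V)
    (hLL : ∀ n m : ℤ, ⁅L n, L m⁆ = ((m : ℂ) - n) • L (m + n))
    (hLY : ∀ n m : ℤ, ⁅L n, Y m⁆ = ((m : ℂ) - (lam + 1) * n / 2 + mu) • Y (m + n))
    (hYY : ∀ n m : ℤ, ⁅Y n, Y m⁆ = ((m : ℂ) - n) • M (m + n))
    (hLM : ∀ n m : ℤ, ⁅L n, M m⁆ = ((m : ℂ) - lam * n + 2 * mu) • M (m + n))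
    (hYMbr : ∀ n m : ℤ, ⁅Y n, M m⁆ = 0)
    (hMMbr : ∀ n m : ℤ, ⁅M n, M m⁆ = 0)
    (ψ : V →ₗ[ℂ] V →ₗ[ℂ] ℂ)
    (hskew : ∀ x y : V, ψ x y = - ψ y x)
    (hcoc : ∀ x y z : V, ψ ⁅x, y⁆ z + ψ ⁅y, z⁆ x + ψ ⁅z, x⁆ y = 0)
    (h0Y : ∀ n : ℤ, ψ (L 0) (Y n) = 0)
    (h0M : ∀ n : ℤ, ψ (L 0) (M n) = 0) :
    ∀ m n : ℤ, ((m : ℂ) + n + 3 * mu) * ψ (Y m) (M n) = 0 :=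
  stmt_2_general lam mu V L Y M hLY hLM hYMbr ψ hskew hcoc
end

section
/- Let ψ be a 2-cocycle on L_{λ,μ} with ψ(L_0, M_n) = 0 for all n. Then for all m, n ∈ ℤ, (m + n + 4μ)·ψ(M_m, M_n) = 0. -/
theorem LieAlgebra.cocycle_eigenvalue_sum_mul_eq_zero {R V : Type*} [CommRing R] [LieRing V]
    [LieAlgebra R V] (ψ : V →ₗ[R] V →ₗ[R] R) (hskew : ∀ x y : V, ψ x y = - ψ y x)
    (hcoc : ∀ x y z : V, ψ ⁅x, y⁆ z + ψ ⁅y, z⁆ x + ψ ⁅z, x⁆ y = 0)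
    {x a b : V} {α β : R} (ha : ⁅x, a⁆ = α • a) (hb : ⁅x, b⁆ = β • b) (hab : ⁅a, b⁆ = 0) :
    (α + β) * ψ a b = 0 := by
  have h := hcoc x a b
  rw [ha, hab, ← lie_skew, hb] at h
  simp only [map_neg, map_smul, map_zero, LinearMap.neg_apply, LinearMap.smul_apply,
    LinearMap.zero_apply, smul_eq_mul, hskew b a] at h
  linear_combination h

theorem stmt_3_general (lam mu : ℂ)
    (V : Type*) [LieRing V] [LieAlgebra ℂ V]
    (L M : ℤ → V)
    (hLM : ∀ n m : ℤ, ⁅L n, M m⁆ = ((m : ℂ) - lam * n + 2 * mu) • M (m + n))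
    (hMMbr : ∀ n m : ℤ, ⁅M n, M m⁆ = 0)
    (ψ : V →ₗ[ℂ] V →ₗ[ℂ] ℂ)
    (hskew : ∀ x y : V, ψ x y = - ψ y x)
    (hcoc : ∀ x y z : V, ψ ⁅x, y⁆ z + ψ ⁅y, z⁆ x + ψ ⁅z, x⁆ y = 0) :
    ∀ m n : ℤ, ((m : ℂ) + n + 4 * mu) * ψ (M m) (M n) = 0 := by
  intro m n
  have hL0 (k : ℤ) : ⁅L 0, M k⁆ = ((k : ℂ) + 2 * mu) • M k := by
    simpa using hLM 0 k
  have h := LieAlgebra.cocycle_eigenvalue_sum_mul_eq_zero ψ hskew hcoc (hL0 m) (hL0 n) (hMMbr m n)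
  linear_combination h

theorem stmt_3 (lam mu : ℂ)
    (V : Type*) [LieRing V] [LieAlgebra ℂ V]
    (L Y M : ℤ → V)
    (hLL : ∀ n m : ℤ, ⁅L n, L m⁆ = ((m : ℂ) - n) • L (m + n))
    (hLY : ∀ n m : ℤ, ⁅L n, Y m⁆ = ((m : ℂ) - (lam + 1) * n / 2 + mu) • Y (m + n))
    (hYY : ∀ n m : ℤ, ⁅Y n, Y m⁆ = ((m : ℂ) - n) • M (m + n))
    (hLM : ∀ n m : ℤ, ⁅L n, M m⁆ = ((m : ℂ) - lam * n + 2 * mu) • M (m + n))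
    (hYMbr : ∀ n m : ℤ, ⁅Y n, M m⁆ = 0)
    (hMMbr : ∀ n m : ℤ, ⁅M n, M m⁆ = 0)
    (ψ : V →ₗ[ℂ] V →ₗ[ℂ] ℂ)
    (hskew : ∀ x y : V, ψ x y = - ψ y x)
    (hcoc : ∀ x y z : V, ψ ⁅x, y⁆ z + ψ ⁅y, z⁆ x + ψ ⁅z, x⁆ y = 0)
    (h0M : ∀ n : ℤ, ψ (L 0) (M n) = 0) :
    ∀ m n : ℤ, ((m : ℂ) + n + 4 * mu) * ψ (M m) (M n) = 0 :=
  stmt_3_general lam mu V L M hLM hMMbr ψ hskew hcoc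
end

section
/- Let ψ be a 2-cocycle on L_{λ,μ} with ψ(L_0, Y_n) = 0 and ψ(L_0, L_n) = 0 for all n. Then for all m, n ∈ ℤ, (m + n + μ)·ψ(L_m, Y_n) = 0. -/
/-
`L 0` acts diagonally: `L m` and `Y n` are eigenvectors of `ad (L 0)` with eigenvalues `m` and
`n + μ`. For a 2-cocycle, the cocycle identity on `(L 0, L m, Y n)` then says that
`(m + n + μ) ψ(L m, Y n)` equals `ψ(L 0, [L m, Y n])`, a multiple of `ψ(L 0, Y (m + n)) = 0`.
-/

section

variable {R V : Type*} [CommRing R] [LieRing V] [LieAlgebra R V]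

theorem weight_add_mul_cocycle_eq_zero (ψ : V →ₗ[R] V →ₗ[R] R)
    (hskew : ∀ x y : V, ψ x y = - ψ y x)
    (hcoc : ∀ x y z : V, ψ ⁅x, y⁆ z + ψ ⁅y, z⁆ x + ψ ⁅z, x⁆ y = 0)
    {x y z : V} {a b : R} (hy : ⁅x, y⁆ = a • y) (hz : ⁅x, z⁆ = b • z)
    (hxyz : ψ x ⁅y, z⁆ = 0) :
    (a + b) * ψ y z = 0 := by
  have h := hcoc x y z
  rw [hy, hskew ⁅y, z⁆, hxyz, ← lie_skew z x, hz] at h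
  simp only [map_smul, map_neg, LinearMap.smul_apply, LinearMap.neg_apply, smul_eq_mul] at h
  linear_combination h + b * hskew z y

end

theorem stmt_4_general (lam mu : ℂ)
    (V : Type*) [LieRing V] [LieAlgebra ℂ V]
    (L Y : ℤ → V)
    (hLL : ∀ n m : ℤ, ⁅L n, L m⁆ = ((m : ℂ) - n) • L (m + n))
    (hLY : ∀ n m : ℤ, ⁅L n, Y m⁆ = ((m : ℂ) - (lam + 1) * n / 2 + mu) • Y (m + n))
    (ψ : V →ₗ[ℂ] V →ₗ[ℂ] ℂ)
    (hskew : ∀ x y : V, ψ x y = - ψ y x)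
    (hcoc : ∀ x y z : V, ψ ⁅x, y⁆ z + ψ ⁅y, z⁆ x + ψ ⁅z, x⁆ y = 0)
    (h0Y : ∀ n : ℤ, ψ (L 0) (Y n) = 0) :
    ∀ m n : ℤ, ((m : ℂ) + n + mu) * ψ (L m) (Y n) = 0 := by
  intro m n
  have hL : ⁅L 0, L m⁆ = (m : ℂ) • L m := by simpa using hLL 0 m
  have hY : ⁅L 0, Y n⁆ = ((n : ℂ) + mu) • Y n := by simpa using hLY 0 n
  have hLY0 : ψ (L 0) ⁅L m, Y n⁆ = 0 := by rw [hLY, map_smul, h0Y, smul_zero]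
  rw [add_assoc]
  exact weight_add_mul_cocycle_eq_zero ψ hskew hcoc hL hY hLY0

theorem stmt_4 (lam mu : ℂ)
    (V : Type*) [LieRing V] [LieAlgebra ℂ V]
    (L Y M : ℤ → V)
    (hLL : ∀ n m : ℤ, ⁅L n, L m⁆ = ((m : ℂ) - n) • L (m + n))
    (hLY : ∀ n m : ℤ, ⁅L n, Y m⁆ = ((m : ℂ) - (lam + 1) * n / 2 + mu) • Y (m + n))
    (hYY : ∀ n m : ℤ, ⁅Y n, Y m⁆ = ((m : ℂ) - n) • M (m + n))
    (hLM : ∀ n m : ℤ, ⁅L n, M m⁆ = ((m : ℂ) - lam * n + 2 * mu) • M (m + n))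
    (hYMbr : ∀ n m : ℤ, ⁅Y n, M m⁆ = 0)
    (hMMbr : ∀ n m : ℤ, ⁅M n, M m⁆ = 0)
    (ψ : V →ₗ[ℂ] V →ₗ[ℂ] ℂ)
    (hskew : ∀ x y : V, ψ x y = - ψ y x)
    (hcoc : ∀ x y z : V, ψ ⁅x, y⁆ z + ψ ⁅y, z⁆ x + ψ ⁅z, x⁆ y = 0)
    (h0Y : ∀ n : ℤ, ψ (L 0) (Y n) = 0)
    (h0L : ∀ n : ℤ, ψ (L 0) (L n) = 0) :
    ∀ m n : ℤ, ((m : ℂ) + n + mu) * ψ (L m) (Y n) = 0 :=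
  stmt_4_general lam mu V L Y hLL hLY ψ hskew hcoc h0Y
end

section
/- Let ψ be a 2-cocycle on L_{λ,μ} vanishing on all pairs (L_m, L_n). Then for all m ∈ ℤ, ((λ+3)m + 2μ)·ψ(M_{−3μ}, Y_0) + 2(λm − μ)·ψ(M_{−m−3μ}, Y_m) = 0, where indices involving μ are valid under the assumption 3μ ∈ ℤ. -/
/-! Apply the cocycle identity to the triple `(L_{-m}, Y_m, M_{-3μ})`: since `Y_m` and `M_{-3μ}`
commute, it says `ψ([L_{-m}, Y_m], M_{-3μ}) = ψ([L_{-m}, M_{-3μ}], Y_m)`, and both brackets are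
scalar multiples of single basis vectors, `Y_0` and `M_{-m-3μ}`. -/

theorem LinearMap.cocycle_lie_left_eq_of_lie_eq_zero {R V : Type*} [CommRing R] [LieRing V]
    [LieAlgebra R V] (ψ : V →ₗ[R] V →ₗ[R] R)
    (hcoc : ∀ x y z : V, ψ ⁅x, y⁆ z + ψ ⁅y, z⁆ x + ψ ⁅z, x⁆ y = 0)
    (x : V) {y z : V} (hyz : ⁅y, z⁆ = 0) : ψ ⁅x, y⁆ z = ψ ⁅x, z⁆ y := by
  have h := hcoc x y z
  rw [hyz, ← lie_skew z x, map_zero, LinearMap.zero_apply, map_neg, LinearMap.neg_apply] at h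
  linear_combination h

theorem stmt_7_general (lam mu : ℂ) (t : ℤ) (ht : (t : ℂ) = 3 * mu)
    (V : Type*) [LieRing V] [LieAlgebra ℂ V]
    (L Y M : ℤ → V)
    (hLY : ∀ n m : ℤ, ⁅L n, Y m⁆ = ((m : ℂ) - (lam + 1) * n / 2 + mu) • Y (m + n))
    (hLM : ∀ n m : ℤ, ⁅L n, M m⁆ = ((m : ℂ) - lam * n + 2 * mu) • M (m + n))
    (hYMbr : ∀ n m : ℤ, ⁅Y n, M m⁆ = 0)
    (ψ : V →ₗ[ℂ] V →ₗ[ℂ] ℂ)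
    (hskew : ∀ x y : V, ψ x y = - ψ y x)
    (hcoc : ∀ x y z : V, ψ ⁅x, y⁆ z + ψ ⁅y, z⁆ x + ψ ⁅z, x⁆ y = 0) :
    ∀ m : ℤ, ((lam + 3) * m + 2 * mu) * ψ (M (-t)) (Y 0)
      + 2 * (lam * m - mu) * ψ (M (-m - t)) (Y m) = 0 := by
  intro m
  have key := ψ.cocycle_lie_left_eq_of_lie_eq_zero hcoc (L (-m)) (hYMbr m (-t))
  rw [hLY, hLM, add_neg_cancel, neg_add_eq_sub] at key
  simp only [map_smul, LinearMap.smul_apply, smul_eq_mul, Int.cast_neg, hskew (Y 0)] at key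
  linear_combination (-2 : ℂ) * key + 2 * ψ (M (-m - t)) (Y m) * ht

theorem stmt_7 (lam mu : ℂ) (t : ℤ) (ht : (t : ℂ) = 3 * mu)
    (V : Type*) [LieRing V] [LieAlgebra ℂ V]
    (L Y M : ℤ → V)
    (hLL : ∀ n m : ℤ, ⁅L n, L m⁆ = ((m : ℂ) - n) • L (m + n))
    (hLY : ∀ n m : ℤ, ⁅L n, Y m⁆ = ((m : ℂ) - (lam + 1) * n / 2 + mu) • Y (m + n))
    (hYY : ∀ n m : ℤ, ⁅Y n, Y m⁆ = ((m : ℂ) - n) • M (m + n))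
    (hLM : ∀ n m : ℤ, ⁅L n, M m⁆ = ((m : ℂ) - lam * n + 2 * mu) • M (m + n))
    (hYMbr : ∀ n m : ℤ, ⁅Y n, M m⁆ = 0)
    (hMMbr : ∀ n m : ℤ, ⁅M n, M m⁆ = 0)
    (ψ : V →ₗ[ℂ] V →ₗ[ℂ] ℂ)
    (hskew : ∀ x y : V, ψ x y = - ψ y x)
    (hcoc : ∀ x y z : V, ψ ⁅x, y⁆ z + ψ ⁅y, z⁆ x + ψ ⁅z, x⁆ y = 0)
    (hLL0 : ∀ a b : ℤ, ψ (L a) (L b) = 0) :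
    ∀ m : ℤ, ((lam + 3) * m + 2 * mu) * ψ (M (-t)) (Y 0)
      + 2 * (lam * m - mu) * ψ (M (-m - t)) (Y m) = 0 :=
  stmt_7_general lam mu t ht V L Y M hLY hLM hYMbr ψ hskew hcoc
end

section
/- Suppose μ ∈ 1/2 + ℤ. Let ψ be a 2-cocycle on L_{λ,μ} with ψ(L_0, x) = 0 for x ∈ {Y_n : n ∈ ℤ} and ψ(L_m, L_n) = 0 for all m,n. Then ψ(L_m, Y_n) = 0 and ψ(Y_m, M_n) = 0 for all m, n ∈ ℤ. -/
/-!
`L 0` acts diagonally, with eigenvalue `n` on `L n`, `n + μ` on `Y n` and `n + 2μ` on `M n`.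
If `⁅d, x⁆ = a • x` and `⁅d, y⁆ = b • y`, the cocycle identity for `d, x, y` reads
`(a + b) ψ(x, y) = ψ(d, ⁅x, y⁆)`. With `d = L 0` the right-hand side vanishes for the pairs
`(L m, Y n)` (as `ψ(L 0, Y _) = 0`) and `(Y m, M n)` (as `⁅Y m, M n⁆ = 0`), while `a + b` is
`m + n + μ` resp. `m + n + 3μ`, nonzero because `μ` is a half-odd-integer.
-/

section Cocycle

variable {R V : Type*} [CommRing R] [LieRing V] [LieAlgebra R V]
  (ψ : V →ₗ[R] V →ₗ[R] R) (hskew : ∀ x y : V, ψ x y = -ψ y x)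
  (hcoc : ∀ x y z : V, ψ ⁅x, y⁆ z + ψ ⁅y, z⁆ x + ψ ⁅z, x⁆ y = 0)
include hskew hcoc

theorem add_mul_apply_eq_apply_lie_of_lie_eq_smul {d x y : V} {a b : R}
    (hx : ⁅d, x⁆ = a • x) (hy : ⁅d, y⁆ = b • y) :
    (a + b) * ψ x y = ψ d ⁅x, y⁆ := by
  have hyd : ⁅y, d⁆ = -(b • y) := by rw [← lie_skew, hy]
  have h := hcoc d x y
  rw [hx, hyd, hskew ⁅x, y⁆ d] at h
  simp only [map_neg, map_smul, LinearMap.neg_apply, LinearMap.smul_apply, smul_eq_mul] at h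
  rw [hskew y x] at h
  linear_combination h

theorem apply_eq_zero_of_lie_eq_smul [IsDomain R] {d x y : V} {a b : R}
    (hx : ⁅d, x⁆ = a • x) (hy : ⁅d, y⁆ = b • y) (hab : a + b ≠ 0)
    (hd : ψ d ⁅x, y⁆ = 0) : ψ x y = 0 := by
  have h := add_mul_apply_eq_apply_lie_of_lie_eq_smul ψ hskew hcoc hx hy
  rw [hd] at h
  exact (mul_eq_zero.mp h).resolve_left hab

end Cocycle

theorem intCast_add_odd_mul_ne_zero {K : Type*} [Field K] [CharZero K] (a k c : ℤ)
    (hc : Odd c) : (a : K) + c * (1 / 2 + k) ≠ 0 := by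
  intro h
  have h2 : ((2 * a + c + 2 * c * k : ℤ) : K) = 0 := by push_cast; linear_combination 2 * h
  have hzero : 2 * a + c + 2 * c * k = 0 := by exact_mod_cast h2
  have hodd : Odd (2 * a + c + 2 * c * k) :=
    ((even_two_mul a).add_odd hc).add_even ((even_two_mul c).mul_right k)
  rw [hzero] at hodd
  exact Int.not_odd_zero hodd

theorem stmt_9_general (lam mu : ℂ) (k : ℤ) (hk : mu = 1 / 2 + (k : ℂ))
    (V : Type*) [LieRing V] [LieAlgebra ℂ V]
    (L Y M : ℤ → V)
    (hLL : ∀ n m : ℤ, ⁅L n, L m⁆ = ((m : ℂ) - n) • L (m + n))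
    (hLY : ∀ n m : ℤ, ⁅L n, Y m⁆ = ((m : ℂ) - (lam + 1) * n / 2 + mu) • Y (m + n))
    (hLM : ∀ n m : ℤ, ⁅L n, M m⁆ = ((m : ℂ) - lam * n + 2 * mu) • M (m + n))
    (hYMbr : ∀ n m : ℤ, ⁅Y n, M m⁆ = 0)
    (ψ : V →ₗ[ℂ] V →ₗ[ℂ] ℂ)
    (hskew : ∀ x y : V, ψ x y = - ψ y x)
    (hcoc : ∀ x y z : V, ψ ⁅x, y⁆ z + ψ ⁅y, z⁆ x + ψ ⁅z, x⁆ y = 0)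
    (h0Y : ∀ n : ℤ, ψ (L 0) (Y n) = 0) :
    ∀ m n : ℤ, ψ (L m) (Y n) = 0 ∧ ψ (Y m) (M n) = 0 := by
  have hL : ∀ j, ⁅L 0, L j⁆ = (j : ℂ) • L j := fun j => by simp [hLL]
  have hY : ∀ j, ⁅L 0, Y j⁆ = ((j : ℂ) + mu) • Y j := fun j => by simp [hLY]
  have hM : ∀ j, ⁅L 0, M j⁆ = ((j : ℂ) + 2 * mu) • M j := fun j => by simp [hLM]
  intro m n
  constructor
  · refine apply_eq_zero_of_lie_eq_smul ψ hskew hcoc (hL m) (hY n) ?_ ?_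
    · simpa [hk, add_assoc] using intCast_add_odd_mul_ne_zero (K := ℂ) (m + n) k 1 odd_one
    · rw [hLY, map_smul, h0Y, smul_zero]
  · refine apply_eq_zero_of_lie_eq_smul ψ hskew hcoc (hY m) (hM n) ?_ ?_
    · convert intCast_add_odd_mul_ne_zero (K := ℂ) (m + n) k 3 (by decide) using 1
      rw [hk]; push_cast; ring
    · rw [hYMbr, map_zero]

theorem stmt_9 (lam mu : ℂ) (k : ℤ) (hk : mu = 1 / 2 + (k : ℂ))
    (V : Type*) [LieRing V] [LieAlgebra ℂ V]
    (L Y M : ℤ → V)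
    (hLL : ∀ n m : ℤ, ⁅L n, L m⁆ = ((m : ℂ) - n) • L (m + n))
    (hLY : ∀ n m : ℤ, ⁅L n, Y m⁆ = ((m : ℂ) - (lam + 1) * n / 2 + mu) • Y (m + n))
    (hYY : ∀ n m : ℤ, ⁅Y n, Y m⁆ = ((m : ℂ) - n) • M (m + n))
    (hLM : ∀ n m : ℤ, ⁅L n, M m⁆ = ((m : ℂ) - lam * n + 2 * mu) • M (m + n))
    (hYMbr : ∀ n m : ℤ, ⁅Y n, M m⁆ = 0)
    (hMMbr : ∀ n m : ℤ, ⁅M n, M m⁆ = 0)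
    (ψ : V →ₗ[ℂ] V →ₗ[ℂ] ℂ)
    (hskew : ∀ x y : V, ψ x y = - ψ y x)
    (hcoc : ∀ x y z : V, ψ ⁅x, y⁆ z + ψ ⁅y, z⁆ x + ψ ⁅z, x⁆ y = 0)
    (h0Y : ∀ n : ℤ, ψ (L 0) (Y n) = 0)
    (hLL0 : ∀ m n : ℤ, ψ (L m) (L n) = 0) :
    ∀ m n : ℤ, ψ (L m) (Y n) = 0 ∧ ψ (Y m) (M n) = 0 :=
  stmt_9_general lam mu k hk V L Y M hLL hLY hLM hYMbr ψ hskew hcoc h0Y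
end

section
/- Let ψ be a 2-cocycle on L_{λ,μ} with ψ(L_a, L_b) = 0 for all a, b. Then for all m, n ∈ ℤ: (m + 2μ − n(1+λ))·ψ(L_{−m−2μ}, M_m) = ((m+2μ)(1+λ) − n)·ψ(L_n, M_{−n−2μ}) + (m + 2μ + n)·ψ(L_{n−m−2μ}, M_{m−n}), assuming 2μ ∈ ℤ so all indices are integers. -/
theorem cocycle_apply_lie_L_L_M {V : Type*} [LieRing V] [LieAlgebra ℂ V]
    (lam mu : ℂ) (L M : ℤ → V)
    (hLL : ∀ n m : ℤ, ⁅L n, L m⁆ = ((m : ℂ) - n) • L (m + n))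
    (hLM : ∀ n m : ℤ, ⁅L n, M m⁆ = ((m : ℂ) - lam * n + 2 * mu) • M (m + n))
    (ψ : V →ₗ[ℂ] V →ₗ[ℂ] ℂ)
    (hskew : ∀ x y : V, ψ x y = - ψ y x)
    (hcoc : ∀ x y z : V, ψ ⁅x, y⁆ z + ψ ⁅y, z⁆ x + ψ ⁅z, x⁆ y = 0) (a b c : ℤ) :
    ((b : ℂ) - a) * ψ (L (a + b)) (M c)
      = ((c : ℂ) - lam * b + 2 * mu) * ψ (L a) (M (b + c))
        - ((c : ℂ) - lam * a + 2 * mu) * ψ (L b) (M (a + c)) := by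
  have h := hcoc (L a) (L b) (M c)
  rw [hLL, hLM, ← lie_skew (M c) (L a), hLM] at h
  simp only [map_smul, map_neg, LinearMap.smul_apply, LinearMap.neg_apply, smul_eq_mul] at h
  rw [hskew (M (c + a)), hskew (M (c + b)), add_comm c b, add_comm c a, add_comm b a] at h
  linear_combination h

theorem stmt_10_general (lam mu : ℂ) (t : ℤ) (ht : (t : ℂ) = 2 * mu)
    (V : Type*) [LieRing V] [LieAlgebra ℂ V]
    (L M : ℤ → V)
    (hLL : ∀ n m : ℤ, ⁅L n, L m⁆ = ((m : ℂ) - n) • L (m + n))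
    (hLM : ∀ n m : ℤ, ⁅L n, M m⁆ = ((m : ℂ) - lam * n + 2 * mu) • M (m + n))
    (ψ : V →ₗ[ℂ] V →ₗ[ℂ] ℂ)
    (hskew : ∀ x y : V, ψ x y = - ψ y x)
    (hcoc : ∀ x y z : V, ψ ⁅x, y⁆ z + ψ ⁅y, z⁆ x + ψ ⁅z, x⁆ y = 0) :
    ∀ m n : ℤ, ((m : ℂ) + 2 * mu - n * (1 + lam)) * ψ (L (-m - t)) (M m)
      = (((m : ℂ) + 2 * mu) * (1 + lam) - n) * ψ (L n) (M (-n - t))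
        + ((m : ℂ) + 2 * mu + n) * ψ (L (n - m - t)) (M (m - n)) := by
  intro m n
  have h := cocycle_apply_lie_L_L_M lam mu L M hLL hLM ψ hskew hcoc (-m - t) n (m - n)
  rw [show -m - t + n = n - m - t by ring, show n + (m - n) = m by ring,
    show -m - t + (m - n) = -n - t by ring] at h
  push_cast at h
  rw [ht] at h
  linear_combination -h

theorem stmt_10 (lam mu : ℂ) (t : ℤ) (ht : (t : ℂ) = 2 * mu)
    (V : Type*) [LieRing V] [LieAlgebra ℂ V]
    (L Y M : ℤ → V)
    (hLL : ∀ n m : ℤ, ⁅L n, L m⁆ = ((m : ℂ) - n) • L (m + n))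
    (hLY : ∀ n m : ℤ, ⁅L n, Y m⁆ = ((m : ℂ) - (lam + 1) * n / 2 + mu) • Y (m + n))
    (hYY : ∀ n m : ℤ, ⁅Y n, Y m⁆ = ((m : ℂ) - n) • M (m + n))
    (hLM : ∀ n m : ℤ, ⁅L n, M m⁆ = ((m : ℂ) - lam * n + 2 * mu) • M (m + n))
    (hYMbr : ∀ n m : ℤ, ⁅Y n, M m⁆ = 0)
    (hMMbr : ∀ n m : ℤ, ⁅M n, M m⁆ = 0)
    (ψ : V →ₗ[ℂ] V →ₗ[ℂ] ℂ)
    (hskew : ∀ x y : V, ψ x y = - ψ y x)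
    (hcoc : ∀ x y z : V, ψ ⁅x, y⁆ z + ψ ⁅y, z⁆ x + ψ ⁅z, x⁆ y = 0)
    (hLL0 : ∀ a b : ℤ, ψ (L a) (L b) = 0) :
    ∀ m n : ℤ, ((m : ℂ) + 2 * mu - n * (1 + lam)) * ψ (L (-m - t)) (M m)
      = (((m : ℂ) + 2 * mu) * (1 + lam) - n) * ψ (L n) (M (-n - t))
        + ((m : ℂ) + 2 * mu + n) * ψ (L (n - m - t)) (M (m - n)) :=
  stmt_10_general lam mu t ht V L M hLL hLM ψ hskew hcoc
end

section
/- Suppose λ ∉ {−5, −3, 1} and μ ∈ ℤ. Let ψ be a 2-cocycle on L_{λ,μ} with ψ(L_a, L_b) = 0 for all a, b and ψ(L_1, Y_{−μ−1}) = 0 and ψ(L_0, Y_n) = 0 for n ≠ −μ. Then for all m ∈ ℤ: ψ(L_{−m−μ}, Y_m) = 2(m+μ+1)(2 + (m+μ−1)(3+λ))·ψ(L_{−1}, Y_{1−μ}) / (5 − 4λ − λ²). -/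
/-!
Every bracket `⁅L a, Y c⁆` shifts the degree by `a`, so the cocycle identity on a triple
`(L a, L b, Y c)` of total degree `-μ` is a linear relation among values of
`f k = ψ (L (-k - μ)) (Y k)`. Taking `a = 1` (where the extra term vanishes by hypothesis) and
`a = -1` (where it is `ψ (L (-1)) (Y (1 - μ))`) gives two relations between `f (m - 1)` and `f m`;
eliminating `f (m - 1)` leaves `f m` times `5 - 4λ - λ² = -(λ + 5)(λ - 1)`.
-/

section

variable {V : Type*} [LieRing V] [LieAlgebra ℂ V]

lemma cocycle_L_L_Y (lam : ℂ) (mu : ℤ) (L Y : ℤ → V)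
    (hLL : ∀ n m : ℤ, ⁅L n, L m⁆ = ((m : ℂ) - n) • L (m + n))
    (hLY : ∀ n m : ℤ, ⁅L n, Y m⁆ = ((m : ℂ) - (lam + 1) * n / 2 + (mu : ℂ)) • Y (m + n))
    (ψ : V →ₗ[ℂ] V →ₗ[ℂ] ℂ) (hskew : ∀ x y : V, ψ x y = - ψ y x)
    (hcoc : ∀ x y z : V, ψ ⁅x, y⁆ z + ψ ⁅y, z⁆ x + ψ ⁅z, x⁆ y = 0) (a b c : ℤ) :
    ((b : ℂ) - a) * ψ (L (a + b)) (Y c)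
      - ((c : ℂ) - (lam + 1) * b / 2 + mu) * ψ (L a) (Y (c + b))
      + ((c : ℂ) - (lam + 1) * a / 2 + mu) * ψ (L b) (Y (c + a)) = 0 := by
  have h := hcoc (L a) (L b) (Y c)
  rw [hLL, hLY, ← lie_skew, hLY, add_comm b a] at h
  simp only [map_smul, map_neg, LinearMap.smul_apply, LinearMap.neg_apply, smul_eq_mul] at h
  rw [hskew (Y (c + b)), hskew (Y (c + a))] at h
  linear_combination h

def cocycleDiag (mu : ℤ) (L Y : ℤ → V) (ψ : V →ₗ[ℂ] V →ₗ[ℂ] ℂ) (k : ℤ) : ℂ :=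
  ψ (L (-k - mu)) (Y k)

lemma cocycleDiag_relation (lam : ℂ) (mu : ℤ) (L Y : ℤ → V)
    (hLL : ∀ n m : ℤ, ⁅L n, L m⁆ = ((m : ℂ) - n) • L (m + n))
    (hLY : ∀ n m : ℤ, ⁅L n, Y m⁆ = ((m : ℂ) - (lam + 1) * n / 2 + (mu : ℂ)) • Y (m + n))
    (ψ : V →ₗ[ℂ] V →ₗ[ℂ] ℂ) (hskew : ∀ x y : V, ψ x y = - ψ y x)
    (hcoc : ∀ x y z : V, ψ ⁅x, y⁆ z + ψ ⁅y, z⁆ x + ψ ⁅z, x⁆ y = 0) (a c : ℤ) :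
    (-2 * (a : ℂ) - c - mu) * cocycleDiag mu L Y ψ c
      - ((c : ℂ) + (lam + 1) * (a + c + mu) / 2 + mu) * ψ (L a) (Y (-a - mu))
      + ((c : ℂ) - (lam + 1) * a / 2 + mu) * cocycleDiag mu L Y ψ (c + a) = 0 := by
  have h := cocycle_L_L_Y lam mu L Y hLL hLY ψ hskew hcoc a (-a - c - mu) c
  rw [show a + (-a - c - mu) = -c - mu by ring, show c + (-a - c - mu) = -a - mu by ring,
    show -a - c - mu = -(c + a) - mu by ring] at h
  unfold cocycleDiag
  push_cast at h
  linear_combination h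

end

lemma five_sub_four_mul_sub_sq_ne_zero {lam : ℂ} (h5 : lam ≠ -5) (h1 : lam ≠ 1) :
    (5 - 4 * lam - lam ^ 2 : ℂ) ≠ 0 := by
  rw [show (5 - 4 * lam - lam ^ 2 : ℂ) = -((lam - -5) * (lam - 1)) by ring, neg_ne_zero]
  exact mul_ne_zero (sub_ne_zero.mpr h5) (sub_ne_zero.mpr h1)

theorem stmt_12_general (lam : ℂ) (mu : ℤ)
    (hlam : lam ≠ -5 ∧ lam ≠ -3 ∧ lam ≠ 1)
    (V : Type*) [LieRing V] [LieAlgebra ℂ V]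
    (L Y : ℤ → V)
    (hLL : ∀ n m : ℤ, ⁅L n, L m⁆ = ((m : ℂ) - n) • L (m + n))
    (hLY : ∀ n m : ℤ, ⁅L n, Y m⁆ = ((m : ℂ) - (lam + 1) * n / 2 + (mu : ℂ)) • Y (m + n))
    (ψ : V →ₗ[ℂ] V →ₗ[ℂ] ℂ)
    (hskew : ∀ x y : V, ψ x y = - ψ y x)
    (hcoc : ∀ x y z : V, ψ ⁅x, y⁆ z + ψ ⁅y, z⁆ x + ψ ⁅z, x⁆ y = 0)
    (h1Y : ψ (L 1) (Y (-mu - 1)) = 0) :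
    ∀ m : ℤ, ψ (L (-m - mu)) (Y m)
      = 2 * ((m : ℂ) + mu + 1) * (2 + ((m : ℂ) + mu - 1) * (3 + lam))
        * ψ (L (-1)) (Y (1 - mu)) / (5 - 4 * lam - lam ^ 2) := by
  intro m
  have hA := cocycleDiag_relation lam mu L Y hLL hLY ψ hskew hcoc 1 (m - 1)
  have hB := cocycleDiag_relation lam mu L Y hLL hLY ψ hskew hcoc (-1) m
  rw [show -(1 : ℤ) - mu = -mu - 1 by ring, h1Y, sub_add_cancel] at hA
  rw [show -(-1 : ℤ) - mu = 1 - mu by ring, show m + -1 = m - 1 by ring] at hB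
  push_cast at hA hB
  rw [eq_div_iff (five_sub_four_mul_sub_sq_ne_zero hlam.1 hlam.2.2)]
  change cocycleDiag mu L Y ψ m * _ = _
  linear_combination (4 * ((m : ℂ) + mu) + 4) * hB + (4 * ((m : ℂ) + mu) + 2 * (lam + 1)) * hA

theorem stmt_12 (lam : ℂ) (mu : ℤ)
    (hlam : lam ≠ -5 ∧ lam ≠ -3 ∧ lam ≠ 1)
    (V : Type*) [LieRing V] [LieAlgebra ℂ V]
    (L Y M : ℤ → V)
    (hLL : ∀ n m : ℤ, ⁅L n, L m⁆ = ((m : ℂ) - n) • L (m + n))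
    (hLY : ∀ n m : ℤ, ⁅L n, Y m⁆ = ((m : ℂ) - (lam + 1) * n / 2 + (mu : ℂ)) • Y (m + n))
    (hYY : ∀ n m : ℤ, ⁅Y n, Y m⁆ = ((m : ℂ) - n) • M (m + n))
    (hLM : ∀ n m : ℤ, ⁅L n, M m⁆ = ((m : ℂ) - lam * n + 2 * (mu : ℂ)) • M (m + n))
    (hYMbr : ∀ n m : ℤ, ⁅Y n, M m⁆ = 0)
    (hMMbr : ∀ n m : ℤ, ⁅M n, M m⁆ = 0)
    (ψ : V →ₗ[ℂ] V →ₗ[ℂ] ℂ)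
    (hskew : ∀ x y : V, ψ x y = - ψ y x)
    (hcoc : ∀ x y z : V, ψ ⁅x, y⁆ z + ψ ⁅y, z⁆ x + ψ ⁅z, x⁆ y = 0)
    (hLL0 : ∀ a b : ℤ, ψ (L a) (L b) = 0)
    (h1Y : ψ (L 1) (Y (-mu - 1)) = 0)
    (h0Y : ∀ n : ℤ, n ≠ -mu → ψ (L 0) (Y n) = 0) :
    ∀ m : ℤ, ψ (L (-m - mu)) (Y m)
      = 2 * ((m : ℂ) + mu + 1) * (2 + ((m : ℂ) + mu - 1) * (3 + lam))
        * ψ (L (-1)) (Y (1 - mu)) / (5 - 4 * lam - lam ^ 2) :=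
  stmt_12_general lam mu hlam V L Y hLL hLY ψ hskew hcoc h1Y
end

section
/- Suppose λ ∉ {−5, −3, −1, 1} and μ ∈ ℤ*. Let ψ be a 2-cocycle on L_{λ,μ} with ψ(L_a, L_b) = 0 for all a, b, ψ(L_0, Y_n) = 0 for n ≠ −μ, and ψ(L_1, Y_{−μ−1}) = 0. Then ψ(L_{−1}, Y_{1−μ}) = 0 and consequently ψ(L_m, Y_n) = 0 for all m, n with m + n + μ = 0. -/
/-!
Put `f m = ψ(L_m, Y_{-μ-m})`. The cocycle identity on `(L_a, L_b, Y_{-μ-a-b})` is a linear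
recurrence for `f`. Its instances at `(a, b) = (1, -1), (-1, 2), (1, -2), (2, -2)` combine to
`(λ + 1)(λ + 3) f(-1) = 0`, so `f(-1) = 0` once `f 1 = 0`; then `f 0 = f 2 = f (-2) = 0`, using
`λ ≠ 1`. Finally the instances `a = 1` and `a = -1` propagate the vanishing of `f` to all of `ℤ`.
-/

section Recurrence

variable {K : Type*} [Field K]

/-- The relation imposed on `m ↦ ψ(L_m, Y_{-μ-m})` by the cocycle identity on
`(L_a, L_b, Y_{-μ-a-b})`. -/
def CocycleRecurrence (lam : K) (f : ℤ → K) : Prop :=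
  ∀ a b : ℤ, ((b : K) - a) * f (a + b) + ((a + b : K) + (lam + 1) * b / 2) * f a
    - ((a + b : K) + (lam + 1) * a / 2) * f b = 0

namespace CocycleRecurrence

variable [CharZero K] {lam : K} {f : ℤ → K}

theorem apply_neg_one_eq_zero (h : CocycleRecurrence lam f) (h1 : f 1 = 0)
    (hlam_neg_one : lam ≠ -1) (hlam_neg_three : lam ≠ -3) : f (-1) = 0 := by
  have k1 := h 1 (-1)
  have k2 := h (-1) 2
  have k3 := h 1 (-2)
  have k4 := h 2 (-2)
  norm_num [h1] at k1 k2 k3 k4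
  have hz : (lam + 1) * (lam + 3) * f (-1) = 0 := by
    linear_combination (lam - 1) / 3 * k4 - 2 * (lam - 1) / 3 * k1 + 2 * (lam + 1) / 3 * k2
      - 2 * (lam + 1) / 3 * k3
  refine (mul_eq_zero.mp hz).resolve_left (mul_ne_zero ?_ ?_)
  · exact fun h' => hlam_neg_one (eq_neg_of_add_eq_zero_left h')
  · exact fun h' => hlam_neg_three (eq_neg_of_add_eq_zero_left h')

theorem apply_zero_eq_zero (h : CocycleRecurrence lam f) (h1 : f 1 = 0) (hm1 : f (-1) = 0) :
    f 0 = 0 := by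
  have k1 := h 1 (-1)
  norm_num [h1, hm1, -mul_eq_zero] at k1
  linear_combination k1 / 2

theorem apply_two_eq_zero (h : CocycleRecurrence lam f) (h1 : f 1 = 0) (hm1 : f (-1) = 0)
    (hlam_one : lam ≠ 1) : f 2 = 0 := by
  have k2 := h (-1) 2
  norm_num [h1, hm1, -mul_eq_zero] at k2
  have hz : (1 - lam) * f 2 = 0 := by linear_combination 2 * k2
  exact (mul_eq_zero.mp hz).resolve_left (sub_ne_zero.mpr hlam_one.symm)

theorem apply_neg_two_eq_zero (h : CocycleRecurrence lam f) (h1 : f 1 = 0) (hm1 : f (-1) = 0)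
    (hlam_one : lam ≠ 1) : f (-2) = 0 := by
  have k3 := h 1 (-2)
  norm_num [h1, hm1, -mul_eq_zero] at k3
  have hz : (1 - lam) * f (-2) = 0 := by linear_combination -2 * k3
  exact (mul_eq_zero.mp hz).resolve_left (sub_ne_zero.mpr hlam_one.symm)

theorem apply_eq_zero_of_two_le (h : CocycleRecurrence lam f) (h1 : f 1 = 0)
    (h2 : f 2 = 0) {n : ℤ} (hn : 2 ≤ n) : f n = 0 := by
  induction n, hn using Int.leInduction with
  | base => exact h2
  | succ n hn ih =>
    have k := h 1 n
    rw [add_comm 1 n] at k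
    have hz : ((n : K) - 1) * f (n + 1) = 0 := by
      linear_combination k - (1 + n + (lam + 1) * n / 2) * h1
        + (1 + n + (lam + 1) / 2) * ih
    refine (mul_eq_zero.mp hz).resolve_left (sub_ne_zero.mpr ?_)
    exact_mod_cast (by omega : n ≠ 1)

theorem apply_eq_zero_of_le_neg_two (h : CocycleRecurrence lam f)
    (hm1 : f (-1) = 0) (hm2 : f (-2) = 0) {n : ℤ} (hn : n ≤ -2) : f n = 0 := by
  induction n, hn using Int.leInductionDown with
  | base => exact hm2
  | pred n hn ih =>
    have k := h (-1) n
    rw [neg_add_eq_sub 1 n] at k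
    have hz : ((n : K) + 1) * f (n - 1) = 0 := by
      linear_combination k
        - ((n : K) - 1 + (lam + 1) * n / 2) * hm1 + (n - 1 - (lam + 1) / 2) * ih
    refine (mul_eq_zero.mp hz).resolve_left fun h' => ?_
    have : (n : K) = -1 := eq_neg_of_add_eq_zero_left h'
    exact absurd (by exact_mod_cast this : n = -1) (by omega)

theorem eq_zero (h : CocycleRecurrence lam f) (h1 : f 1 = 0) (hlam_neg_one : lam ≠ -1)
    (hlam_neg_three : lam ≠ -3) (hlam_one : lam ≠ 1) : f = 0 := by
  have hm1 := h.apply_neg_one_eq_zero h1 hlam_neg_one hlam_neg_three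
  funext n
  obtain hn | hn | hn | hn | hn : 2 ≤ n ∨ n ≤ -2 ∨ n = -1 ∨ n = 0 ∨ n = 1 := by omega
  · exact h.apply_eq_zero_of_two_le h1 (h.apply_two_eq_zero h1 hm1 hlam_one) hn
  · exact h.apply_eq_zero_of_le_neg_two hm1 (h.apply_neg_two_eq_zero h1 hm1 hlam_one) hn
  all_goals subst hn
  · exact hm1
  · exact h.apply_zero_eq_zero h1 hm1
  · exact h1

end CocycleRecurrence

end Recurrence

theorem cocycleRecurrence_of_cocycle {K V : Type*} [Field K] [LieRing V] [LieAlgebra K V]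
    (lam : K) (mu : ℤ) (L Y : ℤ → V)
    (hLL : ∀ n m : ℤ, ⁅L n, L m⁆ = ((m : K) - n) • L (m + n))
    (hLY : ∀ n m : ℤ, ⁅L n, Y m⁆ = ((m : K) - (lam + 1) * n / 2 + (mu : K)) • Y (m + n))
    (ψ : V →ₗ[K] V →ₗ[K] K) (hskew : ∀ x y : V, ψ x y = - ψ y x)
    (hcoc : ∀ x y z : V, ψ ⁅x, y⁆ z + ψ ⁅y, z⁆ x + ψ ⁅z, x⁆ y = 0) :
    CocycleRecurrence lam fun m => ψ (L m) (Y (-mu - m)) := by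
  intro a b
  have h := hcoc (L a) (L b) (Y (-mu - (a + b)))
  rw [hLL a b, hLY b, ← lie_skew, hLY a] at h
  simp only [map_smul, map_neg, LinearMap.smul_apply, LinearMap.neg_apply, smul_eq_mul] at h
  rw [hskew (Y _) (L a), hskew (Y _) (L b), show -mu - (a + b) + b = -mu - a by ring,
    show -mu - (a + b) + a = -mu - b by ring, add_comm b a] at h
  push_cast at h
  linear_combination h

theorem stmt_13_general (lam : ℂ) (mu : ℤ)
    (hlam : lam ≠ -5 ∧ lam ≠ -3 ∧ lam ≠ -1 ∧ lam ≠ 1)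
    (V : Type*) [LieRing V] [LieAlgebra ℂ V]
    (L Y : ℤ → V)
    (hLL : ∀ n m : ℤ, ⁅L n, L m⁆ = ((m : ℂ) - n) • L (m + n))
    (hLY : ∀ n m : ℤ, ⁅L n, Y m⁆ = ((m : ℂ) - (lam + 1) * n / 2 + (mu : ℂ)) • Y (m + n))
    (ψ : V →ₗ[ℂ] V →ₗ[ℂ] ℂ)
    (hskew : ∀ x y : V, ψ x y = - ψ y x)
    (hcoc : ∀ x y z : V, ψ ⁅x, y⁆ z + ψ ⁅y, z⁆ x + ψ ⁅z, x⁆ y = 0)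
    (h1Y : ψ (L 1) (Y (-mu - 1)) = 0) :
    ψ (L (-1)) (Y (1 - mu)) = 0 ∧
    ∀ m n : ℤ, m + n + mu = 0 → ψ (L m) (Y n) = 0 := by
  obtain ⟨-, hlam_neg_three, hlam_neg_one, hlam_one⟩ := hlam
  have hf := (cocycleRecurrence_of_cocycle lam mu L Y hLL hLY ψ hskew hcoc).eq_zero h1Y
    hlam_neg_one hlam_neg_three hlam_one
  refine ⟨?_, fun m n hmn => ?_⟩
  · simpa only [sub_neg_eq_add, neg_add_eq_sub, Pi.zero_apply] using congrFun hf (-1)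
  · simpa only [show -mu - m = n by omega, Pi.zero_apply] using congrFun hf m

theorem stmt_13 (lam : ℂ) (mu : ℤ) (hmu : mu ≠ 0)
    (hlam : lam ≠ -5 ∧ lam ≠ -3 ∧ lam ≠ -1 ∧ lam ≠ 1)
    (V : Type*) [LieRing V] [LieAlgebra ℂ V]
    (L Y M : ℤ → V)
    (hLL : ∀ n m : ℤ, ⁅L n, L m⁆ = ((m : ℂ) - n) • L (m + n))
    (hLY : ∀ n m : ℤ, ⁅L n, Y m⁆ = ((m : ℂ) - (lam + 1) * n / 2 + (mu : ℂ)) • Y (m + n))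
    (hYY : ∀ n m : ℤ, ⁅Y n, Y m⁆ = ((m : ℂ) - n) • M (m + n))
    (hLM : ∀ n m : ℤ, ⁅L n, M m⁆ = ((m : ℂ) - lam * n + 2 * (mu : ℂ)) • M (m + n))
    (hYMbr : ∀ n m : ℤ, ⁅Y n, M m⁆ = 0)
    (hMMbr : ∀ n m : ℤ, ⁅M n, M m⁆ = 0)
    (ψ : V →ₗ[ℂ] V →ₗ[ℂ] ℂ)
    (hskew : ∀ x y : V, ψ x y = - ψ y x)
    (hcoc : ∀ x y z : V, ψ ⁅x, y⁆ z + ψ ⁅y, z⁆ x + ψ ⁅z, x⁆ y = 0)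
    (hLL0 : ∀ a b : ℤ, ψ (L a) (L b) = 0)
    (h0Y : ∀ n : ℤ, n ≠ -mu → ψ (L 0) (Y n) = 0)
    (h1Y : ψ (L 1) (Y (-mu - 1)) = 0) :
    ψ (L (-1)) (Y (1 - mu)) = 0 ∧
    ∀ m n : ℤ, m + n + mu = 0 → ψ (L m) (Y n) = 0 :=
  stmt_13_general lam mu hlam V L Y hLL hLY ψ hskew hcoc h1Y
end

section
/- Suppose λ = −5 and μ ∈ ℤ*. Let ψ be a 2-cocycle on L_{−5,μ} with ψ(L_a, L_b) = 0 for all a, b, ψ(L_0, Y_n) = 0 for n ≠ −μ, and ψ(L_1, Y_{−μ−1}) = 0. Then ψ(L_{−m−μ}, Y_m) = 0 for all m ∈ ℤ. -/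
/-!
Put `g n = ψ (L n) (Y (-μ - n))`. For `λ = -5` we have `[L_n, Y_m] = (m + 2n + μ) Y_{m+n}`, so the
cocycle identity on `(L a, L b, Y (-μ - a - b))` has all three coefficients equal to `±(b - a)` and
reads `(b - a) (g (a + b) - g a - g b) = 0`. Hence `g` is additive on pairs `a ≠ b`, which already
forces `g n = n • g 1`, and `g 1 = 0` by hypothesis.
-/

theorem Int.map_eq_zsmul_of_map_add_of_ne {G : Type*} [AddCommGroup G] {g : ℤ → G}
    (hadd : ∀ a b : ℤ, a ≠ b → g (a + b) = g a + g b) (n : ℤ) : g n = n • g 1 := by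
  have h0 : g 0 = 0 := by simpa using hadd 0 1 (by decide)
  -- `g 5 = g 1 + g 4 = g 2 + g 3` reaches `g 2`, which `a ≠ b` forbids writing as `g 1 + g 1`.
  have h2 : g 2 = (2 : ℤ) • g 1 := by
    have h3 := hadd 1 2 (by decide)
    have h4 := hadd 1 3 (by decide)
    have h5 := hadd 1 4 (by decide)
    have h5' := hadd 2 3 (by decide)
    norm_num at h3 h4 h5 h5'
    rw [h5, h4, h3] at h5'
    linear_combination (norm := module) -h5'
  induction n using Int.induction_on with
  | zero => simpa using h0
  | succ k ih =>
    rcases eq_or_ne (k : ℤ) 1 with hk | hk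
    · rw [hk]; exact h2
    · rw [hadd k 1 hk, ih, add_zsmul, one_zsmul]
  | pred k ih =>
    have h := hadd (-(k : ℤ) - 1) 1 (by omega)
    rw [sub_add_cancel, ih] at h
    rw [sub_zsmul, one_zsmul, h, add_neg_cancel_right]

theorem cocycle_L_Y_add_of_ne {V : Type*} [LieRing V] [LieAlgebra ℂ V] (mu : ℤ) (L Y : ℤ → V)
    (hLL : ∀ n m : ℤ, ⁅L n, L m⁆ = ((m : ℂ) - n) • L (m + n))
    (hLY : ∀ n m : ℤ, ⁅L n, Y m⁆ = ((m : ℂ) + 2 * n + mu) • Y (m + n))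
    (ψ : V →ₗ[ℂ] V →ₗ[ℂ] ℂ) (hskew : ∀ x y : V, ψ x y = - ψ y x)
    (hcoc : ∀ x y z : V, ψ ⁅x, y⁆ z + ψ ⁅y, z⁆ x + ψ ⁅z, x⁆ y = 0) {a b : ℤ} (hab : a ≠ b) :
    ψ (L (a + b)) (Y (-mu - (a + b))) = ψ (L a) (Y (-mu - a)) + ψ (L b) (Y (-mu - b)) := by
  have h := hcoc (L a) (L b) (Y (-mu - (a + b)))
  rw [← lie_skew (Y _) (L a), hLL, hLY, hLY, add_comm b a, show -mu - (a + b) + b = -mu - a by ring,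
    show -mu - (a + b) + a = -mu - b by ring] at h
  simp only [map_smul, map_neg, LinearMap.smul_apply, LinearMap.neg_apply, smul_eq_mul] at h
  rw [hskew (Y (-mu - a)), hskew (Y (-mu - b))] at h
  have hba : (b : ℂ) - a ≠ 0 := sub_ne_zero.mpr (Int.cast_injective.ne hab.symm)
  refine eq_of_sub_eq_zero ((mul_eq_zero.mp ?_).resolve_left hba)
  push_cast at h
  linear_combination h

theorem stmt_14_general (lam : ℂ) (hlam : lam = -5) (mu : ℤ)
    (V : Type*) [LieRing V] [LieAlgebra ℂ V]
    (L Y : ℤ → V)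
    (hLL : ∀ n m : ℤ, ⁅L n, L m⁆ = ((m : ℂ) - n) • L (m + n))
    (hLY : ∀ n m : ℤ, ⁅L n, Y m⁆ = ((m : ℂ) - (lam + 1) * n / 2 + (mu : ℂ)) • Y (m + n))
    (ψ : V →ₗ[ℂ] V →ₗ[ℂ] ℂ)
    (hskew : ∀ x y : V, ψ x y = - ψ y x)
    (hcoc : ∀ x y z : V, ψ ⁅x, y⁆ z + ψ ⁅y, z⁆ x + ψ ⁅z, x⁆ y = 0)
    (h1Y : ψ (L 1) (Y (-mu - 1)) = 0) :
    ∀ m : ℤ, ψ (L (-m - mu)) (Y m) = 0 := by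
  subst hlam
  have hLY' : ∀ n m : ℤ, ⁅L n, Y m⁆ = ((m : ℂ) + 2 * n + mu) • Y (m + n) := fun n m => by
    rw [hLY]; ring_nf
  intro m
  have hg := Int.map_eq_zsmul_of_map_add_of_ne (g := fun n => ψ (L n) (Y (-mu - n)))
    (fun _ _ hab => cocycle_L_Y_add_of_ne mu L Y hLL hLY' ψ hskew hcoc hab) (-m - mu)
  rwa [h1Y, smul_zero, show -mu - (-m - mu) = m by ring] at hg

theorem stmt_14 (lam : ℂ) (hlam : lam = -5) (mu : ℤ) (hmu : mu ≠ 0)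
    (V : Type*) [LieRing V] [LieAlgebra ℂ V]
    (L Y M : ℤ → V)
    (hLL : ∀ n m : ℤ, ⁅L n, L m⁆ = ((m : ℂ) - n) • L (m + n))
    (hLY : ∀ n m : ℤ, ⁅L n, Y m⁆ = ((m : ℂ) - (lam + 1) * n / 2 + (mu : ℂ)) • Y (m + n))
    (hYY : ∀ n m : ℤ, ⁅Y n, Y m⁆ = ((m : ℂ) - n) • M (m + n))
    (hLM : ∀ n m : ℤ, ⁅L n, M m⁆ = ((m : ℂ) - lam * n + 2 * (mu : ℂ)) • M (m + n))
    (hYMbr : ∀ n m : ℤ, ⁅Y n, M m⁆ = 0)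
    (hMMbr : ∀ n m : ℤ, ⁅M n, M m⁆ = 0)
    (ψ : V →ₗ[ℂ] V →ₗ[ℂ] ℂ)
    (hskew : ∀ x y : V, ψ x y = - ψ y x)
    (hcoc : ∀ x y z : V, ψ ⁅x, y⁆ z + ψ ⁅y, z⁆ x + ψ ⁅z, x⁆ y = 0)
    (hLL0 : ∀ a b : ℤ, ψ (L a) (L b) = 0)
    (h0Y : ∀ n : ℤ, n ≠ -mu → ψ (L 0) (Y n) = 0)
    (h1Y : ψ (L 1) (Y (-mu - 1)) = 0) :
    ∀ m : ℤ, ψ (L (-m - mu)) (Y m) = 0 :=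
  stmt_14_general lam hlam mu V L Y hLL hLY ψ hskew hcoc h1Y
end

section
/- Suppose λ = −1 and μ ∈ ℤ*. Let ψ be a 2-cocycle on L_{−1,μ} with ψ(L_a, L_b) = 0 for all a, b. Then for all m ∈ ℤ, ψ(Y_{−m−3μ}, M_m) = ψ(Y_{−3μ}, M_0); i.e., the value of ψ(Y_a, M_b) for a + b = −3μ is independent of a. -/
theorem LinearMap.cocycle_relation_of_lie_eq_smul {R V : Type*} [CommRing R] [LieRing V]
    [LieAlgebra R V] (ψ : V →ₗ[R] V →ₗ[R] R) (hskew : ∀ x y : V, ψ x y = - ψ y x)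
    (hcoc : ∀ x y z : V, ψ ⁅x, y⁆ z + ψ ⁅y, z⁆ x + ψ ⁅z, x⁆ y = 0)
    {l y y' z z' : V} {a b : R} (hly : ⁅l, y⁆ = a • y') (hyz : ⁅y, z⁆ = 0)
    (hlz : ⁅l, z⁆ = b • z') :
    a * ψ y' z + b * ψ y z' = 0 := by
  have h := hcoc l y z
  rw [hly, hyz, ← lie_skew, hlz] at h
  simp only [map_smul, map_neg, map_zero, LinearMap.smul_apply, LinearMap.neg_apply,
    LinearMap.zero_apply, smul_eq_mul, add_zero, hskew z' y] at h
  linear_combination h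

theorem stmt_15_general (lam : ℂ) (hlam : lam = -1) (mu : ℤ) (hmu : mu ≠ 0)
    (V : Type*) [LieRing V] [LieAlgebra ℂ V]
    (L Y M : ℤ → V)
    (hLY : ∀ n m : ℤ, ⁅L n, Y m⁆ = ((m : ℂ) - (lam + 1) * n / 2 + (mu : ℂ)) • Y (m + n))
    (hLM : ∀ n m : ℤ, ⁅L n, M m⁆ = ((m : ℂ) - lam * n + 2 * (mu : ℂ)) • M (m + n))
    (hYMbr : ∀ n m : ℤ, ⁅Y n, M m⁆ = 0)
    (ψ : V →ₗ[ℂ] V →ₗ[ℂ] ℂ)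
    (hskew : ∀ x y : V, ψ x y = - ψ y x)
    (hcoc : ∀ x y z : V, ψ ⁅x, y⁆ z + ψ ⁅y, z⁆ x + ψ ⁅z, x⁆ y = 0) :
    ∀ m : ℤ, ψ (Y (-m - 3 * mu)) (M m) = ψ (Y (-3 * mu)) (M 0) := by
  intro m
  subst hlam
  -- At λ = -1: ⁅L (-m), Y (-3μ)⁆ = -2μ • Y (-m - 3μ) and ⁅L (-m), M m⁆ = 2μ • M 0.
  have key := ψ.cocycle_relation_of_lie_eq_smul hskew hcoc (hLY (-m) (-3 * mu)) (hYMbr _ _)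
    (hLM (-m) m)
  rw [show -3 * mu + -m = -m - 3 * mu by ring, add_neg_cancel] at key
  push_cast at key
  have h2mu : (2 * mu : ℂ) ≠ 0 := by simp [hmu]
  exact mul_left_cancel₀ h2mu (by linear_combination -key)

theorem stmt_15 (lam : ℂ) (hlam : lam = -1) (mu : ℤ) (hmu : mu ≠ 0)
    (V : Type*) [LieRing V] [LieAlgebra ℂ V]
    (L Y M : ℤ → V)
    (hLL : ∀ n m : ℤ, ⁅L n, L m⁆ = ((m : ℂ) - n) • L (m + n))
    (hLY : ∀ n m : ℤ, ⁅L n, Y m⁆ = ((m : ℂ) - (lam + 1) * n / 2 + (mu : ℂ)) • Y (m + n))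
    (hYY : ∀ n m : ℤ, ⁅Y n, Y m⁆ = ((m : ℂ) - n) • M (m + n))
    (hLM : ∀ n m : ℤ, ⁅L n, M m⁆ = ((m : ℂ) - lam * n + 2 * (mu : ℂ)) • M (m + n))
    (hYMbr : ∀ n m : ℤ, ⁅Y n, M m⁆ = 0)
    (hMMbr : ∀ n m : ℤ, ⁅M n, M m⁆ = 0)
    (ψ : V →ₗ[ℂ] V →ₗ[ℂ] ℂ)
    (hskew : ∀ x y : V, ψ x y = - ψ y x)
    (hcoc : ∀ x y z : V, ψ ⁅x, y⁆ z + ψ ⁅y, z⁆ x + ψ ⁅z, x⁆ y = 0)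
    (hLL0 : ∀ a b : ℤ, ψ (L a) (L b) = 0) :
    ∀ m : ℤ, ψ (Y (-m - 3 * mu)) (M m) = ψ (Y (-3 * mu)) (M 0) :=
  stmt_15_general lam hlam mu hmu V L Y M hLY hLM hYMbr ψ hskew hcoc
end

section
/- Suppose λ ≠ −1 and μ ∈ ℤ*. Let ψ be a 2-cocycle on L_{λ,μ} with ψ(L_a, L_b) = 0 for all a, b. Then (m + 2μ)(1+λ)·(ψ(Y_{−m−3μ}, M_m) + 2ψ(Y_{−μ}, M_{−2μ})) = 0 for all m ∈ ℤ; in particular, for every m ≠ −2μ, ψ(Y_{−m−3μ}, M_m) = −2·ψ(Y_{−μ}, M_{−2μ}). -/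
theorem stmt_16 (lam : ℂ) (hlam : lam ≠ -1) (mu : ℤ) (hmu : mu ≠ 0)
    (V : Type*) [LieRing V] [LieAlgebra ℂ V]
    (L Y M : ℤ → V)
    (hLL : ∀ n m : ℤ, ⁅L n, L m⁆ = ((m : ℂ) - n) • L (m + n))
    (hLY : ∀ n m : ℤ, ⁅L n, Y m⁆ = ((m : ℂ) - (lam + 1) * n / 2 + (mu : ℂ)) • Y (m + n))
    (hYY : ∀ n m : ℤ, ⁅Y n, Y m⁆ = ((m : ℂ) - n) • M (m + n))
    (hLM : ∀ n m : ℤ, ⁅L n, M m⁆ = ((m : ℂ) - lam * n + 2 * (mu : ℂ)) • M (m + n))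
    (hYMbr : ∀ n m : ℤ, ⁅Y n, M m⁆ = 0)
    (hMMbr : ∀ n m : ℤ, ⁅M n, M m⁆ = 0)
    (ψ : V →ₗ[ℂ] V →ₗ[ℂ] ℂ)
    (hskew : ∀ x y : V, ψ x y = - ψ y x)
    (hcoc : ∀ x y z : V, ψ ⁅x, y⁆ z + ψ ⁅y, z⁆ x + ψ ⁅z, x⁆ y = 0)
    (hLL0 : ∀ a b : ℤ, ψ (L a) (L b) = 0) :
    (∀ m : ℤ, ((m : ℂ) + 2 * mu) * (1 + lam)
        * (ψ (Y (-m - 3 * mu)) (M m) + 2 * ψ (Y (-mu)) (M (-2 * mu))) = 0) ∧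
    (∀ m : ℤ, m ≠ -2 * mu →
        ψ (Y (-m - 3 * mu)) (M m) = -2 * ψ (Y (-mu)) (M (-2 * mu))) := by
  have key : ∀ m : ℤ, ((m : ℂ) + 2 * mu) * (1 + lam)
      * (ψ (Y (-m - 3 * mu)) (M m) + 2 * ψ (Y (-mu)) (M (-2 * mu))) = 0 := by
    intro m
    have h := hcoc (L (-2 * mu - m)) (Y (-mu)) (M m)
    have hML : ⁅M m, L (-2 * mu - m)⁆
        = -(((m : ℂ) - lam * (-2 * mu - m : ℤ) + 2 * mu) • M (m + (-2 * mu - m))) := by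
      rw [← lie_skew, hLM]
    rw [hLY, hYMbr, hML] at h
    have hi1 : (-mu + (-2 * mu - m)) = -m - 3 * mu := by ring
    have hi2 : (m + (-2 * mu - m)) = -2 * mu := by ring
    rw [hi1, hi2] at h
    simp only [map_smul, map_neg, LinearMap.smul_apply, LinearMap.neg_apply, map_zero,
      LinearMap.zero_apply, smul_eq_mul, neg_smul] at h
    rw [hskew (M (-2 * mu)) (Y (-mu))] at h
    push_cast at h ⊢
    linear_combination (2 : ℂ) * h
  refine ⟨key, fun m hm => ?_⟩
  have h := key m
  have h1 : ((m : ℂ) + 2 * mu) ≠ 0 := by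
    intro hc
    apply hm
    have : ((m : ℂ)) = ((-2 * mu : ℤ) : ℂ) := by push_cast; linear_combination hc
    exact_mod_cast this
  have h2 : (1 + lam) ≠ 0 := fun hc => hlam (by linear_combination hc)
  rcases mul_eq_zero.mp h with h3 | h3
  · rcases mul_eq_zero.mp h3 with h4 | h4
    · exact absurd h4 h1
    · exact absurd h4 h2
  · linear_combination h3
end
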